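/- Let A = {A_1,...,A_L} be strings and W a common subsequence. For 0 ≤ k ≤ |W|, the set BreakPoints(A,W) of indices k such that the strings Middle(A_l,W,k) share a common character is empty if and only if W is a maximal common subsequence of A. -/

import Mathlib

/-!
A character `c` lies in `Middle A W k` exactly when `W.take k ++ c :: W.drop k` is a subsequence
of `A`: any embedding of that word puts `c` after the shortest prefix containing `W.take k` and
before the shortest suffix containing `W.drop k`, and conversely an occurrence of `c` between
those two greedy embeddings extends them. So the breakpoints are precisely the positions where a
single-character insertion stays common to all strings, and there are none iff `W` is maximal.
-/

open List

/-- Length of the shortest prefix of `A` containing `W` as a subsequence. -/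
noncomputable def minPrefixLen {α : Type*} (A W : List α) : ℕ :=
  sInf {n | W <+ A.take n}

/-- Length of the shortest suffix of `A` containing `W` as a subsequence. -/
noncomputable def minSuffixLen {α : Type*} (A W : List α) : ℕ :=
  sInf {n | W <+ A.drop (A.length - n)}

/-- `Middle A W k`: what remains of `A` after deleting the shortest prefix containing
`W.take k` as a subsequence and the shortest suffix containing `W.drop k`. -/
noncomputable def Middle {α : Type*} (A W : List α) (k : ℕ) : List α :=
  (A.take (A.length - minSuffixLen A (W.drop k))).drop (minPrefixLen A (W.take k))

/-- `W` is a common subsequence of all strings in `𝒜`. -/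
def IsCommonSubseq {α : Type*} (𝒜 : Finset (List α)) (W : List α) : Prop :=
  ∀ A ∈ 𝒜, W <+ A

/-- `W` is a maximal common subsequence of `𝒜`: it is a common subsequence and
inserting any single character at any position never yields a common subsequence. -/
def IsMCS {α : Type*} (𝒜 : Finset (List α)) (W : List α) : Prop :=
  IsCommonSubseq 𝒜 W ∧
    ∀ (c : α) (k : ℕ), k ≤ W.length →
      ¬ IsCommonSubseq 𝒜 (W.take k ++ c :: W.drop k)

/-- The set of breakpoints: indices `k` at which a character common to all middle
segments can be inserted into `W`. -/
def BreakPoints {α : Type*} (𝒜 : Finset (List α)) (W : List α) : Set ℕ :=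
  {k | k ≤ W.length ∧ ∃ c : α, ∀ A ∈ 𝒜, c ∈ Middle A W k}

section

variable {α : Type*}

lemma sublist_take_minPrefixLen {A W : List α} (h : W <+ A) :
    W <+ A.take (minPrefixLen A W) :=
  Nat.sInf_mem (⟨A.length, by simpa using h⟩ : {n | W <+ A.take n}.Nonempty)

lemma minPrefixLen_le {A W : List α} {n : ℕ} (h : W <+ A.take n) : minPrefixLen A W ≤ n :=
  Nat.sInf_le h

lemma sublist_drop_minSuffixLen {A W : List α} (h : W <+ A) :
    W <+ A.drop (A.length - minSuffixLen A W) :=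
  Nat.sInf_mem (⟨A.length, by simpa using h⟩ : {n | W <+ A.drop (A.length - n)}.Nonempty)

lemma minSuffixLen_le {A W : List α} {n : ℕ} (h : W <+ A.drop (A.length - n)) :
    minSuffixLen A W ≤ n :=
  Nat.sInf_le h

lemma exists_eq_append_cons_of_append_cons_sublist {l₁ l₂ A : List α} {c : α}
    (h : l₁ ++ c :: l₂ <+ A) :
    ∃ A₁ A₂, A = A₁ ++ c :: A₂ ∧ l₁ <+ A₁ ∧ l₂ <+ A₂ := by
  obtain ⟨r₁, r₂, rfl, h₁, h₂⟩ := append_sublist_iff.mp h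
  obtain ⟨s₁, s₂, rfl, hc, hs₂⟩ := cons_sublist_iff.mp h₂
  obtain ⟨u, v, rfl⟩ := append_of_mem hc
  exact ⟨r₁ ++ u, v ++ s₂, by simp, h₁.trans (sublist_append_left _ _),
    hs₂.trans (sublist_append_right _ _)⟩

lemma append_cons_sublist_of_mem_drop_take {l₁ l₂ A : List α} {c : α} {p q : ℕ}
    (h₁ : l₁ <+ A.take p) (h₂ : l₂ <+ A.drop q) (hc : c ∈ (A.take q).drop p) :
    l₁ ++ c :: l₂ <+ A := by
  obtain ⟨m₁, m₂, hm⟩ := append_of_mem hc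
  have hpq : p ≤ q := by
    have := length_pos_of_mem hc
    simp only [length_drop, length_take] at this
    omega
  have hA : A = A.take p ++ (m₁ ++ c :: m₂) ++ A.drop q := by
    conv_lhs => rw [← take_append_drop q A, ← take_append_drop p (take q A), take_take,
      min_eq_left hpq]
    rw [hm]
  rw [hA, append_assoc, append_assoc]
  exact h₁.append (((h₂.trans (sublist_append_right m₂ _)).cons_cons c).trans
    (sublist_append_right m₁ _))

lemma mem_drop_take_append_cons {A₁ A₂ : List α} {c : α} {p q : ℕ}
    (hp : p ≤ A₁.length) (hq : A₁.length < q) : c ∈ ((A₁ ++ c :: A₂).take q).drop p := by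
  obtain ⟨r, rfl⟩ := Nat.exists_eq_add_of_lt hq
  rw [take_append, take_of_length_le (by omega), drop_append_of_le_length hp,
    show A₁.length + r + 1 - A₁.length = r + 1 by omega]
  simp

theorem mem_middle_iff {A W : List α} {k : ℕ} (hWA : W <+ A) (c : α) :
    c ∈ Middle A W k ↔ W.take k ++ c :: W.drop k <+ A := by
  constructor
  · exact append_cons_sublist_of_mem_drop_take
      (sublist_take_minPrefixLen ((take_sublist k W).trans hWA))
      (sublist_drop_minSuffixLen ((drop_sublist k W).trans hWA))
  · intro h
    obtain ⟨A₁, A₂, rfl, h₁, h₂⟩ := exists_eq_append_cons_of_append_cons_sublist h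
    have hp : minPrefixLen (A₁ ++ c :: A₂) (W.take k) ≤ A₁.length :=
      minPrefixLen_le (by simpa using h₁)
    have hs : minSuffixLen (A₁ ++ c :: A₂) (W.drop k) ≤ A₂.length := by
      apply minSuffixLen_le
      rwa [show A₁ ++ c :: A₂ = A₁ ++ [c] ++ A₂ by simp, length_append, Nat.add_sub_cancel,
        drop_left]
    exact mem_drop_take_append_cons hp (by simp; omega)

theorem breakPoints_eq {𝒜 : Finset (List α)} {W : List α} (hW : IsCommonSubseq 𝒜 W) :
    BreakPoints 𝒜 W =
      {k | k ≤ W.length ∧ ∃ c, IsCommonSubseq 𝒜 (W.take k ++ c :: W.drop k)} := by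
  ext k
  exact and_congr_right fun _ => exists_congr fun c =>
    forall₂_congr fun A hA => mem_middle_iff (hW A hA) c

end

theorem stmt15 {α : Type*} (𝒜 : Finset (List α)) (W : List α)
    (hW : IsCommonSubseq 𝒜 W) :
    BreakPoints 𝒜 W = ∅ ↔ IsMCS 𝒜 W := by
  rw [breakPoints_eq hW, Set.eq_empty_iff_forall_notMem]
  simp only [IsMCS, hW, true_and, Set.mem_ofPred_eq, not_and, not_exists]
  exact ⟨fun h c k hk => h k hk c, fun h k hk c => h c k hk⟩
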